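/- If H is a proper spanning subgraph of a finite simple graph G (not necessarily connected), then m(H, x) > m(G, x) for all real x > t(G). -/

import Mathlib

/-!
For an edge `e = uv` the matching polynomial satisfies `m(G) = m(G - e) - m(G - u - v)`, and for a
vertex `u` it satisfies `m(G) = x m(G - u) - ∑_{v ~ u} m(G - u - v)`. Evaluating the vertex
recurrence at the largest root of `m(G - u)` shows, by induction on the number of vertices, that
deleting a vertex does not increase the largest root. Hence `m(G - u - v)` is positive above
`t(G)`, so the edge recurrence gives `m(G, x) < m(G - e, x)` and `t(G - e) ≤ t(G)` there; deleting
the edges of `G` missing from `H` one at a time proves the theorem.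
-/

open Polynomial

/-- Number of matchings with exactly `k` edges in `G`. -/
noncomputable def matchingCount {V : Type*} [Fintype V] (G : SimpleGraph V) (k : ℕ) : ℕ :=
  Nat.card {s : Finset (Sym2 V) // s.card = k ∧ (∀ e ∈ s, e ∈ G.edgeSet) ∧
    ∀ e ∈ s, ∀ f ∈ s, e ≠ f → ∀ x : V, x ∈ e → x ∉ f}

/-- The matching polynomial `m(G,x) = ∑ (-1)^k m_k(G) x^(n-2k)`. -/
noncomputable def matchPoly {V : Type*} [Fintype V] (G : SimpleGraph V) : Polynomial ℝ :=
  ∑ k ∈ Finset.range (Fintype.card V + 1),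
    Polynomial.C ((-1 : ℝ) ^ k * (matchingCount G k : ℝ)) *
      Polynomial.X ^ (Fintype.card V - 2 * k)

/-- The maximum real root `t(G)` of the matching polynomial. -/
noncomputable def maxRoot {V : Type*} [Fintype V] (G : SimpleGraph V) : ℝ :=
  sSup {x : ℝ | (matchPoly G).eval x = 0}

open Finset

namespace Polynomial.Monic

variable {p : ℝ[X]} {t : ℝ}

theorem eval_nonneg_of_mem_upperBounds (hp : p.Monic) (ht : t ∈ upperBounds {r | p.IsRoot r}) :
    0 ≤ p.eval t := by
  by_contra! hneg
  have hdeg : 0 < p.degree := by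
    refine natDegree_pos_iff_degree_pos.1 (Nat.pos_of_ne_zero fun h0 => ?_)
    rw [hp.natDegree_eq_zero.1 h0, eval_one] at hneg
    exact one_pos.not_gt hneg
  obtain ⟨y, hy, hty⟩ := ((p.tendsto_atTop_of_leadingCoeff_nonneg hdeg
    (by rw [hp.leadingCoeff]; exact zero_le_one)).eventually_gt_atTop 0 |>.and
    (Filter.eventually_ge_atTop t)).exists
  obtain ⟨r, hr, hr0⟩ :=
    intermediate_value_Icc hty p.continuous.continuousOn ⟨hneg.le, hy.le⟩
  rw [le_antisymm (ht hr0) hr.1] at hr0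
  exact hneg.ne hr0

theorem eval_pos_of_mem_upperBounds (hp : p.Monic) (ht : t ∈ upperBounds {r | p.IsRoot r})
    {x : ℝ} (hx : t < x) : 0 < p.eval x :=
  (hp.eval_nonneg_of_mem_upperBounds fun _ hr => (ht hr).trans hx.le).lt_of_ne
    fun h0 => (ht h0.symm).not_gt hx

end Polynomial.Monic

theorem Finset.card_erase_erase_add_two {α : Type*} [DecidableEq α] {s : Finset α} {a b : α}
    (hab : a ≠ b) (ha : a ∈ s) (hb : b ∈ s) : ((s.erase a).erase b).card + 2 = s.card := by
  rw [← card_erase_add_one ha, ← card_erase_add_one (mem_erase.2 ⟨hab.symm, hb⟩)]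

namespace SimpleGraph

variable {V : Type*} [DecidableEq V] {G : SimpleGraph V} {A : Finset V} {M : Finset (Sym2 V)}
  {u v : V}

open Classical in
noncomputable def matchingsOn (G : SimpleGraph V) (A : Finset V) : Finset (Finset (Sym2 V)) :=
  A.sym2.powerset.filter fun M =>
    (∀ e ∈ M, e ∈ G.edgeSet) ∧ (M : Set (Sym2 V)).Pairwise fun e f => ∀ x ∈ e, x ∉ f

theorem mem_matchingsOn : M ∈ G.matchingsOn A ↔
    M ⊆ A.sym2 ∧ (∀ e ∈ M, e ∈ G.edgeSet) ∧
      (M : Set (Sym2 V)).Pairwise fun e f => ∀ x ∈ e, x ∉ f := by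
  simp [matchingsOn]

theorem insert_mem_matchingsOn (h : G.Adj u v) (hu : u ∈ A) (hv : v ∈ A)
    (hM : M ∈ G.matchingsOn ((A.erase u).erase v)) : insert s(u, v) M ∈ G.matchingsOn A := by
  obtain ⟨hMA, hMG, hMdisj⟩ := mem_matchingsOn.1 hM
  have avoid : ∀ f ∈ M, ∀ x ∈ f, x ≠ u ∧ x ≠ v := fun f hf x hx => by
    have := mem_sym2_iff.1 (hMA hf) x hx
    simp only [mem_erase] at this
    exact ⟨this.2.1, this.1⟩
  refine mem_matchingsOn.2 ⟨?_, ?_, ?_⟩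
  · exact insert_subset (mk_mem_sym2_iff.2 ⟨hu, hv⟩)
      (hMA.trans (sym2_mono ((erase_subset _ _).trans (erase_subset _ _))))
  · exact forall_mem_insert _ _ _ |>.2 ⟨h, hMG⟩
  · rw [coe_insert, Set.pairwise_insert]
    refine ⟨hMdisj, fun f hf _ => ⟨?_, fun x hx hxe => ?_⟩⟩
    · rintro x hx hxf
      rcases Sym2.mem_iff.1 hx with rfl | rfl
      exacts [(avoid f hf x hxf).1 rfl, (avoid f hf x hxf).2 rfl]
    · rcases Sym2.mem_iff.1 hxe with rfl | rfl
      exacts [(avoid f hf x hx).1 rfl, (avoid f hf x hx).2 rfl]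

theorem erase_mem_matchingsOn (hM : M ∈ G.matchingsOn A) (huv : s(u, v) ∈ M) :
    M.erase s(u, v) ∈ G.matchingsOn ((A.erase u).erase v) := by
  obtain ⟨hMA, hMG, hMdisj⟩ := mem_matchingsOn.1 hM
  refine mem_matchingsOn.2 ⟨fun e he => mem_sym2_iff.2 fun x hx => ?_,
    fun e he => hMG e (mem_of_mem_erase he), hMdisj.mono (by simp)⟩
  have hxA := mem_sym2_iff.1 (hMA (mem_of_mem_erase he)) x hx
  have hxuv := hMdisj (mem_of_mem_erase he) huv (ne_of_mem_erase he) x hx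
  simp only [Sym2.mem_iff, not_or] at hxuv
  simp [hxuv, hxA]

theorem notMem_of_mem_matchingsOn_erase (hM : M ∈ G.matchingsOn ((A.erase u).erase v)) :
    s(u, v) ∉ M := fun huv => by
  have := mem_sym2_iff.1 ((mem_matchingsOn.1 hM).1 huv) u (Sym2.mem_mk_left u v)
  simp at this

theorem two_mul_card_le_of_mem_matchingsOn (hM : M ∈ G.matchingsOn A) :
    2 * M.card ≤ A.card := by
  induction hn : M.card generalizing M A with
  | zero => simp
  | succ n ih =>
    obtain ⟨e, he⟩ := card_pos.1 (by rw [hn]; exact n.succ_pos)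
    induction e using Sym2.ind with | _ u v => ?_
    have huv : G.Adj u v := (mem_matchingsOn.1 hM).2.1 _ he
    have hu : u ∈ A := mem_sym2_iff.1 ((mem_matchingsOn.1 hM).1 he) u (Sym2.mem_mk_left u v)
    have hv : v ∈ A := mem_sym2_iff.1 ((mem_matchingsOn.1 hM).1 he) v (Sym2.mem_mk_right u v)
    have := ih (erase_mem_matchingsOn hM he) (by rw [card_erase_of_mem he, hn]; rfl)
    have := card_erase_erase_add_two huv.ne hu hv
    omega

theorem filter_mem_matchingsOn_eq_image (h : G.Adj u v) (hu : u ∈ A) (hv : v ∈ A) :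
    (G.matchingsOn A).filter (s(u, v) ∈ ·) =
      (G.matchingsOn ((A.erase u).erase v)).image (insert s(u, v)) := by
  ext M
  simp only [mem_filter, mem_image]
  constructor
  · rintro ⟨hM, huv⟩
    exact ⟨_, erase_mem_matchingsOn hM huv, insert_erase huv⟩
  · rintro ⟨M, hM, rfl⟩
    exact ⟨insert_mem_matchingsOn h hu hv hM, mem_insert_self _ _⟩

theorem filter_notMem_matchingsOn :
    (G.matchingsOn A).filter (s(u, v) ∉ ·) = (G.deleteEdges {s(u, v)}).matchingsOn A := by
  ext M
  simp only [mem_filter, mem_matchingsOn, edgeSet_deleteEdges, Set.mem_sdiff,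
    Set.mem_singleton_iff]
  constructor
  · rintro ⟨⟨hMA, hMG, hMdisj⟩, huv⟩
    exact ⟨hMA, fun e he => ⟨hMG e he, by rintro rfl; exact huv he⟩, hMdisj⟩
  · rintro ⟨hMA, hMG, hMdisj⟩
    exact ⟨⟨hMA, fun e he => (hMG e he).1, hMdisj⟩, fun huv => (hMG _ huv).2 rfl⟩

theorem filter_not_exists_mem_matchingsOn :
    (G.matchingsOn A).filter (fun M => ¬∃ e ∈ M, u ∈ e) = G.matchingsOn (A.erase u) := by
  ext M
  simp only [mem_filter, mem_matchingsOn, not_exists, not_and]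
  constructor
  · rintro ⟨⟨hMA, hMG, hMdisj⟩, hu⟩
    refine ⟨fun e he => mem_sym2_iff.2 fun x hx => mem_erase.2 ⟨?_, ?_⟩, hMG, hMdisj⟩
    · rintro rfl; exact hu e he hx
    · exact mem_sym2_iff.1 (hMA he) x hx
  · rintro ⟨hMA, hMG, hMdisj⟩
    refine ⟨⟨hMA.trans (sym2_mono (erase_subset _ _)), hMG, hMdisj⟩, fun e he hu => ?_⟩
    simpa using mem_sym2_iff.1 (hMA he) u hu

theorem filter_exists_mem_matchingsOn_eq_biUnion [DecidableRel G.Adj] :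
    (G.matchingsOn A).filter (fun M => ∃ e ∈ M, u ∈ e) =
      (A.filter (G.Adj u)).biUnion fun v => (G.matchingsOn A).filter (s(u, v) ∈ ·) := by
  ext M
  simp only [mem_filter, mem_biUnion]
  constructor
  · rintro ⟨hM, e, he, hue⟩
    obtain ⟨v, rfl⟩ := Sym2.mem_iff_exists.1 hue
    exact ⟨v, ⟨mem_sym2_iff.1 ((mem_matchingsOn.1 hM).1 he) v (Sym2.mem_mk_right u v),
      (mem_matchingsOn.1 hM).2.1 _ he⟩, hM, he⟩
  · rintro ⟨v, -, hM, huv⟩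
    exact ⟨hM, _, huv, Sym2.mem_mk_left u v⟩

theorem pairwiseDisjoint_filter_mem_matchingsOn [DecidableRel G.Adj] :
    (A.filter (G.Adj u) : Set V).PairwiseDisjoint
      fun v => (G.matchingsOn A).filter (s(u, v) ∈ ·) := by
  intro v _ w _ hvw
  refine Finset.disjoint_left.2 fun M hv hw => ?_
  rw [mem_filter] at hv hw
  exact (mem_matchingsOn.1 hv.1).2.2 hv.2 hw.2 (fun h => hvw (Sym2.congr_right.1 h)) u
    (Sym2.mem_mk_left u v) (Sym2.mem_mk_left u w)

theorem empty_mem_matchingsOn : ∅ ∈ G.matchingsOn A := by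
  simp [mem_matchingsOn]

/-- The matching polynomial of the induced subgraph `G[A]`. -/
noncomputable def matchPolyOn (G : SimpleGraph V) (A : Finset V) : ℝ[X] :=
  ∑ M ∈ G.matchingsOn A, (-1) ^ M.card * X ^ (A.card - 2 * M.card)

theorem sum_filter_mem_matchingsOn (h : G.Adj u v) (hu : u ∈ A) (hv : v ∈ A) :
    ∑ M ∈ (G.matchingsOn A).filter (s(u, v) ∈ ·),
        (-1 : ℝ[X]) ^ M.card * X ^ (A.card - 2 * M.card) =
      -G.matchPolyOn ((A.erase u).erase v) := by
  have hA := card_erase_erase_add_two h.ne hu hv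
  rw [filter_mem_matchingsOn_eq_image h hu hv, sum_image, matchPolyOn, ← sum_neg_distrib]
  · refine sum_congr rfl fun M hM => ?_
    rw [card_insert_of_notMem (notMem_of_mem_matchingsOn_erase hM),
      show A.card - 2 * (M.card + 1) = ((A.erase u).erase v).card - 2 * M.card by omega]
    ring
  · intro M hM N hN hMN
    rw [← erase_insert (notMem_of_mem_matchingsOn_erase hM),
      ← erase_insert (notMem_of_mem_matchingsOn_erase hN)]
    exact congrArg (·.erase s(u, v)) hMN

theorem matchPolyOn_eq_X_mul_sub_sum [DecidableRel G.Adj] (hu : u ∈ A) :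
    G.matchPolyOn A = X * G.matchPolyOn (A.erase u) -
      ∑ v ∈ A.filter (G.Adj u), G.matchPolyOn ((A.erase u).erase v) := by
  rw [matchPolyOn, ← sum_filter_not_add_sum_filter _ (fun M => ∃ e ∈ M, u ∈ e),
    filter_not_exists_mem_matchingsOn, filter_exists_mem_matchingsOn_eq_biUnion,
    sum_biUnion pairwiseDisjoint_filter_mem_matchingsOn, sub_eq_add_neg, ← sum_neg_distrib,
    matchPolyOn, mul_sum]
  congr 1
  · refine sum_congr rfl fun M hM => ?_
    have := two_mul_card_le_of_mem_matchingsOn hM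
    have := card_erase_add_one hu
    rw [mul_left_comm, ← pow_succ']
    congr 2
    omega
  · exact sum_congr rfl fun v hv =>
      sum_filter_mem_matchingsOn (mem_filter.1 hv).2 hu (mem_filter.1 hv).1

theorem matchPolyOn_eq_deleteEdges_sub (h : G.Adj u v) (hu : u ∈ A) (hv : v ∈ A) :
    G.matchPolyOn A =
      (G.deleteEdges {s(u, v)}).matchPolyOn A - G.matchPolyOn ((A.erase u).erase v) := by
  rw [matchPolyOn, ← sum_filter_not_add_sum_filter _ (s(u, v) ∈ ·), filter_notMem_matchingsOn,
    sum_filter_mem_matchingsOn h hu hv, sub_eq_add_neg]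
  rfl

theorem monic_matchPolyOn : (G.matchPolyOn A).Monic := by
  rw [matchPolyOn, ← add_sum_erase _ _ empty_mem_matchingsOn, card_empty, mul_zero, pow_zero,
    one_mul, Nat.sub_zero]
  refine monic_X_pow_add ((degree_sum_le _ _).trans_lt ?_)
  refine (Finset.sup_lt_iff (WithBot.bot_lt_coe _)).2 fun M hM => ?_
  have hMA := two_mul_card_le_of_mem_matchingsOn (mem_of_mem_erase hM)
  have hM0 := card_pos.2 (nonempty_iff_ne_empty.2 (ne_of_mem_erase hM))
  refine (degree_mul_le _ _).trans_lt ?_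
  rw [degree_pow, degree_neg, degree_one, nsmul_zero, zero_add, degree_X_pow]
  exact_mod_cast (by omega : A.card - 2 * M.card < A.card)

theorem upperBounds_isRoot_matchPolyOn_subset_erase (hu : u ∈ A) :
    upperBounds {r | (G.matchPolyOn A).IsRoot r} ⊆
      upperBounds {r | (G.matchPolyOn (A.erase u)).IsRoot r} := by
  classical
  induction A using Finset.strongInduction generalizing u with | H A ih => ?_
  intro t ht r hr
  by_contra! htr
  obtain ⟨ρ, hρ, hρmax⟩ := ((G.matchPolyOn (A.erase u)).finite_setOfPred_isRoot
    monic_matchPolyOn.ne_zero).isCompact.exists_isGreatest ⟨r, hr⟩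
  have hpos : 0 < (G.matchPolyOn A).eval ρ :=
    monic_matchPolyOn.eval_pos_of_mem_upperBounds ht (htr.trans_le (hρmax hr))
  have hnonneg : ∀ v ∈ A.filter (G.Adj u),
      0 ≤ (G.matchPolyOn ((A.erase u).erase v)).eval ρ := fun v hv => by
    obtain ⟨hvA, huv⟩ := mem_filter.1 hv
    exact monic_matchPolyOn.eval_nonneg_of_mem_upperBounds <|
      ih _ (erase_ssubset hu) (mem_erase.2 ⟨huv.ne', hvA⟩) hρmax
  rw [matchPolyOn_eq_X_mul_sub_sum hu, eval_sub, eval_mul, hρ.eq_zero, mul_zero, eval_finsetSum,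
    zero_sub, neg_pos] at hpos
  exact (sum_nonneg hnonneg).not_gt hpos

theorem eval_matchPolyOn_lt_deleteEdges (h : G.Adj u v) (hu : u ∈ A) (hv : v ∈ A) {t x : ℝ}
    (ht : t ∈ upperBounds {r | (G.matchPolyOn A).IsRoot r}) (hx : t < x) :
    (G.matchPolyOn A).eval x < ((G.deleteEdges {s(u, v)}).matchPolyOn A).eval x := by
  have ht' := upperBounds_isRoot_matchPolyOn_subset_erase (mem_erase.2 ⟨h.ne', hv⟩)
    (upperBounds_isRoot_matchPolyOn_subset_erase hu ht)
  rw [matchPolyOn_eq_deleteEdges_sub h hu hv, eval_sub, sub_lt_self_iff]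
  exact monic_matchPolyOn.eval_pos_of_mem_upperBounds ht' hx

theorem upperBounds_isRoot_matchPolyOn_subset_deleteEdges (h : G.Adj u v) (hu : u ∈ A)
    (hv : v ∈ A) :
    upperBounds {r | (G.matchPolyOn A).IsRoot r} ⊆
      upperBounds {r | ((G.deleteEdges {s(u, v)}).matchPolyOn A).IsRoot r} := fun t ht r hr => by
  by_contra! htr
  have := eval_matchPolyOn_lt_deleteEdges h hu hv ht htr
  rw [hr.eq_zero] at this
  exact (monic_matchPolyOn.eval_pos_of_mem_upperBounds ht htr).not_gt this

section Fintype

variable [Fintype V]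

theorem eval_matchPolyOn_univ_lt_of_lt {H : SimpleGraph V} (hHG : H < G) {t x : ℝ}
    (ht : t ∈ upperBounds {r | (G.matchPolyOn univ).IsRoot r}) (hx : t < x) :
    (G.matchPolyOn univ).eval x < (H.matchPolyOn univ).eval x := by
  induction G using WellFoundedLT.induction with | ind G ih => ?_
  obtain ⟨u, v, hG, hH⟩ : ∃ u v, G.Adj u v ∧ ¬H.Adj u v := by
    by_contra! h
    exact hHG.not_ge fun u v huv => h u v huv
  have hlt := eval_matchPolyOn_lt_deleteEdges hG (mem_univ u) (mem_univ v) ht hx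
  have hHG' : H ≤ G.deleteEdges {s(u, v)} := fun a b hab =>
    deleteEdges_adj.2 ⟨hHG.le hab, fun h =>
      hH <| H.mem_edgeSet.1 <| Set.mem_singleton_iff.1 h ▸ H.mem_edgeSet.2 hab⟩
  rcases hHG'.eq_or_lt with rfl | hHG'
  · exact hlt
  · refine hlt.trans (ih _ ((deleteEdges_le _).lt_of_ne fun h => ?_) hHG'
      (upperBounds_isRoot_matchPolyOn_subset_deleteEdges hG (mem_univ u) (mem_univ v) ht))
    exact (deleteEdges_adj.1 (h ▸ hG)).2 rfl

theorem matchingCount_eq_card_filter_matchingsOn (G : SimpleGraph V) (k : ℕ) :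
    matchingCount G k = #((G.matchingsOn univ).filter (·.card = k)) := by
  rw [matchingCount, ← Nat.card_eq_finsetCard]
  refine Nat.card_congr (Equiv.subtypeEquivRight fun M => ?_)
  simp only [mem_filter, mem_matchingsOn, subset_iff, mem_sym2_iff, mem_univ, implies_true,
    true_and]
  tauto

theorem matchPoly_eq_matchPolyOn_univ (G : SimpleGraph V) : matchPoly G = G.matchPolyOn univ := by
  rw [matchPolyOn, ← sum_fiberwise_of_maps_to (g := card) (t := range (Fintype.card V + 1))
    fun M hM => mem_range_succ_iff.2 ?_, matchPoly]
  · refine sum_congr rfl fun k _ => ?_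
    rw [sum_congr rfl fun M hM => by rw [(mem_filter.1 hM).2], sum_const, card_univ,
      ← matchingCount_eq_card_filter_matchingsOn, nsmul_eq_mul]
    simp only [map_mul, map_pow, map_neg, map_one, map_natCast]
    ring
  · have := two_mul_card_le_of_mem_matchingsOn hM
    rw [card_univ] at this
    omega

theorem maxRoot_mem_upperBounds (G : SimpleGraph V) :
    maxRoot G ∈ upperBounds {r | (G.matchPolyOn univ).IsRoot r} := by
  rw [maxRoot, matchPoly_eq_matchPolyOn_univ]
  exact fun _ hr => le_csSup ((G.matchPolyOn univ).finite_setOfPred_isRoot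
    monic_matchPolyOn.ne_zero).bddAbove hr

end Fintype

end SimpleGraph

/-- If `H` is a proper spanning subgraph of `G` (not necessarily connected), then
`m(H,x) > m(G,x)` for all `x > t(G)`. -/
theorem matchPoly_lt_of_proper_spanning_subgraph {V : Type*} [Fintype V]
    (G H : SimpleGraph V) (hHG : H ≤ G) (hne : H ≠ G) :
    ∀ x : ℝ, maxRoot G < x → (matchPoly G).eval x < (matchPoly H).eval x := by
  classical
  intro x hx
  rw [G.matchPoly_eq_matchPolyOn_univ, H.matchPoly_eq_matchPolyOn_univ]
  exact SimpleGraph.eval_matchPolyOn_univ_lt_of_lt (lt_of_le_of_ne hHG hne)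
    G.maxRoot_mem_upperBounds hx
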